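/- arXiv:2601.10840 — 6 statements merged into one kernel-verified Lean document; each statement's English description precedes it below -/
import Mathlib

section
/- Let G = (V,E) be a TiRS digraph (a reflexive digraph satisfying (S), (R), (Ti)). Then G satisfies weak antisymmetry: for all x, y in V, if xE ⊆ yE and Ex ⊆ Ey, then x = y. -/
theorem tirs_weak_antisymmetry_general {V : Type*} (E : V → V → Prop)
    (hrefl : ∀ x : V, E x x)
    (hS : ∀ x y : V, x ≠ y → {z | E x z} ≠ {z | E y z} ∨ {z | E z x} ≠ {z | E z y})
    (hR1 : ∀ x y : V, {z | E x z} ⊂ {z | E y z} → ¬ E x y)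
    (hR2 : ∀ x y : V, {z | E z x} ⊂ {z | E z y} → ¬ E y x) :
    ∀ x y : V, {z | E x z} ⊆ {z | E y z} → {z | E z x} ⊆ {z | E z y} → x = y := by
  intro x y hout hin
  by_contra hne
  -- reflexivity at `x` gives both edges between `x` and `y`, which (R) forbids once an inclusion is strict
  rcases hS x y hne with hout_ne | hin_ne
  · exact hR1 x y (hout.ssubset_of_ne hout_ne) (hin (hrefl x))
  · exact hR2 x y (hin.ssubset_of_ne hin_ne) (hout (hrefl x))

/-- Weak antisymmetry of TiRS digraphs: if `xE ⊆ yE` and `Ex ⊆ Ey` then `x = y`. -/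
theorem tirs_weak_antisymmetry {V : Type*} (E : V → V → Prop)
    (hrefl : ∀ x : V, E x x)
    (hS : ∀ x y : V, x ≠ y → {z | E x z} ≠ {z | E y z} ∨ {z | E z x} ≠ {z | E z y})
    (hR1 : ∀ x y : V, {z | E x z} ⊂ {z | E y z} → ¬ E x y)
    (hR2 : ∀ x y : V, {z | E z x} ⊂ {z | E z y} → ¬ E y x)
    (hTi : ∀ x y : V, E x y → ∃ z : V, {w | E z w} ⊆ {w | E x w} ∧ {w | E w z} ⊆ {w | E w y}) :
    ∀ x y : V, {z | E x z} ⊆ {z | E y z} → {z | E z x} ⊆ {z | E z y} → x = y :=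
  tirs_weak_antisymmetry_general E hrefl hS hR1 hR2
end

section
/- Let L be an ortholattice, f : L → {0,1} a maximal partial homomorphism (MPH) of the lattice reduct of L into the two-element bounded lattice. Define the partial map g(f) by g(f)(a) = 0 if f(a') = 1 and g(f)(a) = 1 if f(a') = 0. Then g(f) is again a maximal partial homomorphism from L to {0,1}. -/
/-!
The map `g = gmap oc` is an involution on partial maps `L → Option Bool` which preserves the
extension order. By De Morgan's laws `oc` exchanges `⊓` with `⊔` and `⊤` with `⊥`, while `!`
exchanges `&&` with `||` and `true` with `false`, so `g` also preserves partial homomorphisms.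
Hence `g` is an order automorphism of the partial homomorphisms and sends maximal ones to maximal
ones: if `h` extends `g f`, then `g h` extends `g (g f) = f`, so `g h = f` and `h = g f`.
-/

/-- A (lattice) filter: nonempty, up-closed, closed under meets. -/
def IsLatFilter {L : Type*} [Lattice L] (F : Set L) : Prop :=
  F.Nonempty ∧ (∀ a b : L, a ∈ F → a ≤ b → b ∈ F) ∧ (∀ a b : L, a ∈ F → b ∈ F → a ⊓ b ∈ F)

/-- A (lattice) ideal: nonempty, down-closed, closed under joins. -/
def IsLatIdeal {L : Type*} [Lattice L] (I : Set L) : Prop :=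
  I.Nonempty ∧ (∀ a b : L, a ∈ I → b ≤ a → b ∈ I) ∧ (∀ a b : L, a ∈ I → b ∈ I → a ⊔ b ∈ I)

/-- A maximal disjoint filter-ideal pair. -/
def IsMDFIP {L : Type*} [Lattice L] (F I : Set L) : Prop :=
  IsLatFilter F ∧ IsLatIdeal I ∧ F ∩ I = ∅ ∧
  ∀ G J : Set L, IsLatFilter G → IsLatIdeal J → G ∩ J = ∅ → F ⊆ G → I ⊆ J → G = F ∧ J = I

/-- An orthocomplementation on a bounded lattice. -/
def IsOrtho {L : Type*} [Lattice L] [BoundedOrder L] (oc : L → L) : Prop :=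
  (∀ a : L, oc (oc a) = a) ∧ (∀ a : L, a ⊓ oc a = ⊥) ∧ (∀ a : L, a ⊔ oc a = ⊤) ∧
  (∀ a b : L, oc (a ⊓ b) = oc a ⊔ oc b) ∧ (∀ a b : L, oc (a ⊔ b) = oc a ⊓ oc b)

/-- A partial (0,1)-lattice homomorphism into the two-element lattice `Bool`,
represented as a map into `Option Bool` (`none` = undefined). -/
def IsPartialHom {L : Type*} [Lattice L] [BoundedOrder L] (f : L → Option Bool) : Prop :=
  f ⊤ = some true ∧ f ⊥ = some false ∧
  (∀ a b : L, ∀ x y : Bool, f a = some x → f b = some y →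
    f (a ⊓ b) = some (x && y) ∧ f (a ⊔ b) = some (x || y))

/-- A maximal partial homomorphism (MPH): admits no proper partial-hom extension. -/
def IsMPH {L : Type*} [Lattice L] [BoundedOrder L] (f : L → Option Bool) : Prop :=
  IsPartialHom f ∧
  ∀ h : L → Option Bool, IsPartialHom h → (∀ a : L, ∀ b : Bool, f a = some b → h a = some b) → h = f

/-- The Ploščica relation on partial maps: `x⁻¹(1) ∩ y⁻¹(0) = ∅`. -/
def Erel {L : Type*} (x y : L → Option Bool) : Prop :=
  ∀ a : L, ¬ (x a = some true ∧ y a = some false)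

/-- The dual map `g` representing the orthocomplement: `g(f)(a) = 1` iff `f(a') = 0`. -/
def gmap {L : Type*} (oc : L → L) (f : L → Option Bool) : L → Option Bool :=
  fun a => Option.map (fun b => !b) (f (oc a))

section

variable {L : Type*}

lemma gmap_eq_some (oc : L → L) (f : L → Option Bool) (a : L) (b : Bool) :
    gmap oc f a = some b ↔ f (oc a) = some (!b) := by
  unfold gmap
  cases f (oc a) with
  | none => simp
  | some c => cases b <;> cases c <;> simp

lemma gmap_gmap {oc : L → L} (hoc : Function.Involutive oc) (f : L → Option Bool) :
    gmap oc (gmap oc f) = f := by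
  funext a
  simp only [gmap, hoc a, Option.map_map]
  cases f a <;> simp

lemma gmap_extends {oc : L → L} {f h : L → Option Bool}
    (hext : ∀ a b, f a = some b → h a = some b) :
    ∀ a b, gmap oc f a = some b → gmap oc h a = some b := by
  simp only [gmap_eq_some]
  exact fun a b => hext (oc a) !b

end

namespace IsOrtho

variable {L : Type*} [Lattice L] [BoundedOrder L] {oc : L → L}

lemma involutive (hoc : IsOrtho oc) : Function.Involutive oc := hoc.1

lemma map_inf (hoc : IsOrtho oc) (a b : L) : oc (a ⊓ b) = oc a ⊔ oc b := hoc.2.2.2.1 a b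

lemma map_sup (hoc : IsOrtho oc) (a b : L) : oc (a ⊔ b) = oc a ⊓ oc b := hoc.2.2.2.2 a b

lemma map_top (hoc : IsOrtho oc) : oc ⊤ = ⊥ := by
  simpa using hoc.2.1 ⊤

lemma map_bot (hoc : IsOrtho oc) : oc ⊥ = ⊤ := by
  simpa using hoc.2.2.1 ⊥

end IsOrtho

lemma IsPartialHom.gmap {L : Type*} [Lattice L] [BoundedOrder L] {oc : L → L}
    (hoc : IsOrtho oc) {f : L → Option Bool} (hf : IsPartialHom f) :
    IsPartialHom (gmap oc f) := by
  obtain ⟨hf_top, hf_bot, hf_inf_sup⟩ := hf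
  refine ⟨?_, ?_, fun a b x y ha hb => ?_⟩
  · simpa [gmap_eq_some, hoc.map_top] using hf_bot
  · simpa [gmap_eq_some, hoc.map_bot] using hf_top
  · rw [gmap_eq_some] at ha hb
    obtain ⟨h_inf, h_sup⟩ := hf_inf_sup (oc a) (oc b) (!x) (!y) ha hb
    rw [gmap_eq_some, gmap_eq_some, hoc.map_inf, hoc.map_sup, h_inf, h_sup]
    cases x <;> cases y <;> simp

/-- If `f` is an MPH from an ortholattice to the two-element lattice, then so is `g(f)`,
where `g(f)(a) = 0` if `f(a') = 1` and `g(f)(a) = 1` if `f(a') = 0`. -/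
theorem gmap_is_mph {L : Type*} [Lattice L] [BoundedOrder L] (oc : L → L)
    (hoc : IsOrtho oc) (f : L → Option Bool) (hf : IsMPH f) :
    IsMPH (gmap oc f) := by
  obtain ⟨hf_hom, hf_max⟩ := hf
  refine ⟨hf_hom.gmap hoc, fun h hh hext => ?_⟩
  have hg_ext : ∀ a b, f a = some b → gmap oc h a = some b := by
    simpa only [gmap_gmap hoc.involutive] using gmap_extends (oc := oc) hext
  have hgh : gmap oc h = f := hf_max _ (hh.gmap hoc) hg_ext
  rw [← hgh, gmap_gmap hoc.involutive]
end

section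
/- Let L be an ortholattice with MPH dual (P_L, E) and dual orthocomplement map g as above. Then for every x ∈ P_L there exists y ∈ P_L such that yE ⊆ xE and Ey ⊆ Eg(x). -/
/-! Let `F₀` be the filter generated by `x⁻¹(1)`. Since `a ⊓ a' = 0`, it is disjoint from the
ideal `F₀' = {a | a' ∈ F₀}`; by Zorn the pair `(F₀, F₀')` extends to a maximal disjoint
filter-ideal pair, and `y` is the MPH it determines. Then `x⁻¹(1) ⊆ y⁻¹(1)` gives `yE ⊆ xE`,
and `g(x)⁻¹(0) ⊆ F₀' ⊆ y⁻¹(0)` gives `Ey ⊆ Eg(x)`. -/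

section Lattice

variable {L : Type*} [Lattice L]

theorem IsLatFilter.top_mem [BoundedOrder L] {F : Set L} (hF : IsLatFilter F) : ⊤ ∈ F :=
  let ⟨a, ha⟩ := hF.1
  hF.2.1 a ⊤ ha le_top

-- `IsLatIdeal` on `L` is definitionally `IsLatFilter` on `Lᵒᵈ`.
theorem IsLatIdeal.bot_mem [BoundedOrder L] {I : Set L} (hI : IsLatIdeal I) : ⊥ ∈ I :=
  IsLatFilter.top_mem (L := Lᵒᵈ) hI

theorem isLatFilter_biUnion {β : Type*} [Preorder β] {c : Set β} {f : β → Set L}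
    (hf : Monotone f) (hc : DirectedOn (· ≤ ·) c) (hne : c.Nonempty)
    (h : ∀ p ∈ c, IsLatFilter (f p)) : IsLatFilter (⋃ p ∈ c, f p) := by
  refine ⟨?_, ?_, ?_⟩
  · obtain ⟨p, hp⟩ := hne
    obtain ⟨a, ha⟩ := (h p hp).1
    exact ⟨a, Set.mem_biUnion hp ha⟩
  all_goals simp only [Set.mem_iUnion₂]
  · rintro a b ⟨p, hp, ha⟩ hab
    exact ⟨p, hp, (h p hp).2.1 a b ha hab⟩
  · rintro a b ⟨p, hp, ha⟩ ⟨q, hq, hb⟩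
    obtain ⟨r, hr, hpr, hqr⟩ := hc p hp q hq
    exact ⟨r, hr, (h r hr).2.2 a b (hf hpr ha) (hf hqr hb)⟩

theorem isLatIdeal_biUnion {β : Type*} [Preorder β] {c : Set β} {f : β → Set L}
    (hf : Monotone f) (hc : DirectedOn (· ≤ ·) c) (hne : c.Nonempty)
    (h : ∀ p ∈ c, IsLatIdeal (f p)) : IsLatIdeal (⋃ p ∈ c, f p) :=
  isLatFilter_biUnion (L := Lᵒᵈ) hf hc hne h

theorem exists_isMDFIP_of_subset {F₀ I₀ : Set L} (hF₀ : IsLatFilter F₀) (hI₀ : IsLatIdeal I₀)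
    (hd : F₀ ∩ I₀ = ∅) : ∃ F I : Set L, IsMDFIP F I ∧ F₀ ⊆ F ∧ I₀ ⊆ I := by
  let s : Set (Set L × Set L) := {p | IsLatFilter p.1 ∧ IsLatIdeal p.2 ∧ p.1 ∩ p.2 = ∅}
  have hchain : ∀ c ⊆ s, IsChain (· ≤ ·) c → ∀ p ∈ c, ∃ ub ∈ s, ∀ q ∈ c, q ≤ ub := by
    intro c hcs hc p hp
    have hdir := hc.directedOn
    have hdisj : (⋃ q ∈ c, q.1) ∩ (⋃ q ∈ c, q.2) = ∅ := by
      refine Set.eq_empty_iff_forall_notMem.2 fun a ⟨ha₁, ha₂⟩ => ?_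
      obtain ⟨q, hq, haq⟩ := Set.mem_iUnion₂.1 ha₁
      obtain ⟨r, hr, har⟩ := Set.mem_iUnion₂.1 ha₂
      obtain ⟨t, ht, hqt, hrt⟩ := hdir q hq r hr
      exact Set.eq_empty_iff_forall_notMem.1 (hcs ht).2.2 a ⟨hqt.1 haq, hrt.2 har⟩
    refine ⟨(⋃ q ∈ c, q.1, ⋃ q ∈ c, q.2), ⟨?_, ?_, hdisj⟩, fun q hq => ⟨?_, ?_⟩⟩
    · exact isLatFilter_biUnion monotone_fst hdir ⟨p, hp⟩ fun q hq => (hcs hq).1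
    · exact isLatIdeal_biUnion monotone_snd hdir ⟨p, hp⟩ fun q hq => (hcs hq).2.1
    · exact Set.subset_biUnion_of_mem (u := Prod.fst) hq
    · exact Set.subset_biUnion_of_mem (u := Prod.snd) hq
  obtain ⟨m, ⟨hF, hI⟩, hm⟩ := zorn_le_nonempty₀ s hchain (F₀, I₀) ⟨hF₀, hI₀, hd⟩
  refine ⟨m.1, m.2, ⟨hm.prop.1, hm.prop.2.1, hm.prop.2.2, ?_⟩, hF, hI⟩
  intro G J hG hJ hGJ hmG hmJ
  exact Prod.ext_iff.1 (hm.eq_of_le (y := (G, J)) ⟨hG, hJ, hGJ⟩ ⟨hmG, hmJ⟩).symm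

end Lattice

section

variable {L : Type*}

open Classical in
noncomputable def pairFun (F I : Set L) : L → Option Bool :=
  fun a => if a ∈ F then some true else if a ∈ I then some false else none

theorem pairFun_eq_some_true_iff {F I : Set L} {a : L} : pairFun F I a = some true ↔ a ∈ F := by
  unfold pairFun
  split_ifs <;> simp_all

theorem pairFun_eq_some_false_iff {F I : Set L} (hd : F ∩ I = ∅) {a : L} :
    pairFun F I a = some false ↔ a ∈ I := by
  have : a ∈ I → a ∉ F := fun hI hF => Set.eq_empty_iff_forall_notMem.1 hd a ⟨hF, hI⟩
  unfold pairFun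
  split_ifs <;> simp_all

theorem gmap_eq_some_false_iff {oc : L → L} {f : L → Option Bool} {a : L} :
    gmap oc f a = some false ↔ f (oc a) = some true := by
  simp [gmap]

end

section PartialHom

variable {L : Type*} [Lattice L] [BoundedOrder L]

def trueFilter (f : L → Option Bool) : Set L := {c | ∃ a, f a = some true ∧ a ≤ c}

def falseIdeal (f : L → Option Bool) : Set L := {c | ∃ a, f a = some false ∧ c ≤ a}

namespace IsPartialHom

variable {f : L → Option Bool}

theorem isLatFilter_trueFilter (hf : IsPartialHom f) : IsLatFilter (trueFilter f) := by
  refine ⟨⟨⊤, ⊤, hf.1, le_rfl⟩, ?_, ?_⟩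
  · rintro a b ⟨c, hc, hca⟩ hab
    exact ⟨c, hc, hca.trans hab⟩
  · rintro a b ⟨c, hc, hca⟩ ⟨d, hd, hdb⟩
    exact ⟨c ⊓ d, (hf.2.2 c d true true hc hd).1, inf_le_inf hca hdb⟩

theorem isLatIdeal_falseIdeal (hf : IsPartialHom f) : IsLatIdeal (falseIdeal f) := by
  refine ⟨⟨⊥, ⊥, hf.2.1, le_rfl⟩, ?_, ?_⟩
  · rintro a b ⟨c, hc, hca⟩ hab
    exact ⟨c, hc, hab.trans hca⟩
  · rintro a b ⟨c, hc, hca⟩ ⟨d, hd, hdb⟩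
    exact ⟨c ⊔ d, (hf.2.2 c d false false hc hd).2, sup_le_sup hca hdb⟩

theorem trueFilter_inter_falseIdeal (hf : IsPartialHom f) :
    trueFilter f ∩ falseIdeal f = ∅ := by
  refine Set.eq_empty_iff_forall_notMem.2 ?_
  rintro c ⟨⟨a, ha, hac⟩, ⟨b, hb, hcb⟩⟩
  have hsup := (hf.2.2 a b true false ha hb).2
  rw [sup_eq_right.2 (hac.trans hcb), hb] at hsup
  simp at hsup

theorem bot_notMem_trueFilter (hf : IsPartialHom f) : ⊥ ∉ trueFilter f := fun h =>
  Set.eq_empty_iff_forall_notMem.1 hf.trueFilter_inter_falseIdeal ⊥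
    ⟨h, hf.isLatIdeal_falseIdeal.bot_mem⟩

end IsPartialHom

theorem isPartialHom_pairFun {F I : Set L} (hF : IsLatFilter F) (hI : IsLatIdeal I)
    (hd : F ∩ I = ∅) : IsPartialHom (pairFun F I) := by
  have hmem : ∀ {a : L} {x : Bool}, pairFun F I a = some x ↔ if x then a ∈ F else a ∈ I := by
    intro a x
    cases x
    · exact pairFun_eq_some_false_iff hd
    · exact pairFun_eq_some_true_iff
  refine ⟨hmem.2 hF.top_mem, hmem.2 hI.bot_mem, ?_⟩
  rintro a b (_ | _) (_ | _) ha hb <;>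
    simp only [hmem, Bool.and_false, Bool.and_true, Bool.or_false, Bool.or_true] at ha hb ⊢
  · exact ⟨hI.2.1 a _ ha inf_le_left, hI.2.2 a b ha hb⟩
  · exact ⟨hI.2.1 a _ ha inf_le_left, hF.2.1 b _ hb le_sup_right⟩
  · exact ⟨hI.2.1 b _ hb inf_le_right, hF.2.1 a _ ha le_sup_left⟩
  · exact ⟨hF.2.2 a b ha hb, hF.2.1 a _ ha le_sup_left⟩

namespace IsMDFIP

variable {F I : Set L}

theorem isMPH_pairFun (h : IsMDFIP F I) : IsMPH (pairFun F I) := by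
  obtain ⟨hF, hI, hd, hmax⟩ := h
  refine ⟨isPartialHom_pairFun hF hI hd, fun g hg hext => ?_⟩
  obtain ⟨hgF, hgI⟩ : trueFilter g = F ∧ falseIdeal g = I :=
    hmax _ _ hg.isLatFilter_trueFilter hg.isLatIdeal_falseIdeal hg.trueFilter_inter_falseIdeal
      (fun a ha => ⟨a, hext a true (pairFun_eq_some_true_iff.2 ha), le_rfl⟩)
      (fun a ha => ⟨a, hext a false ((pairFun_eq_some_false_iff hd).2 ha), le_rfl⟩)
  funext a
  rcases hga : g a with _ | _ | _
  · cases hpa : pairFun F I a with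
    | none => rfl
    | some b => simpa [hga] using hext a b hpa
  · exact ((pairFun_eq_some_false_iff hd).2 (hgI ▸ ⟨a, hga, le_rfl⟩)).symm
  · exact (pairFun_eq_some_true_iff.2 (hgF ▸ ⟨a, hga, le_rfl⟩)).symm

end IsMDFIP

end PartialHom

namespace IsOrtho

variable {L : Type*} [Lattice L] [BoundedOrder L] {oc : L → L}

theorem antitone (hoc : IsOrtho oc) : Antitone oc := fun a b hab => by
  rw [← sup_eq_right.2 hab, hoc.2.2.2.2]
  exact inf_le_left

theorem isLatIdeal_preimage (hoc : IsOrtho oc) {F : Set L} (hF : IsLatFilter F) :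
    IsLatIdeal (oc ⁻¹' F) := by
  refine ⟨?_, fun a b ha hba => hF.2.1 _ _ ha (hoc.antitone hba), fun a b ha hb => ?_⟩
  · obtain ⟨a, ha⟩ := hF.1
    exact ⟨oc a, by rwa [Set.mem_preimage, hoc.1]⟩
  · rw [Set.mem_preimage, hoc.2.2.2.2]
    exact hF.2.2 _ _ ha hb

theorem inter_preimage_eq_empty (hoc : IsOrtho oc) {F : Set L} (hF : IsLatFilter F)
    (hbot : ⊥ ∉ F) : F ∩ oc ⁻¹' F = ∅ :=
  Set.eq_empty_iff_forall_notMem.2 fun a ⟨ha, hoca⟩ => hbot (hoc.2.1 a ▸ hF.2.2 _ _ ha hoca)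

end IsOrtho

/-- Condition (O) for the dual of an ortholattice: for every MPH `x` there is an MPH `y`
with `yE ⊆ xE` and `Ey ⊆ Eg(x)`. -/
theorem gmap_O {L : Type*} [Lattice L] [BoundedOrder L] (oc : L → L)
    (hoc : IsOrtho oc) (x : L → Option Bool) (hx : IsMPH x) :
    ∃ y : L → Option Bool, IsMPH y ∧
      (∀ z : L → Option Bool, IsMPH z → Erel y z → Erel x z) ∧
      (∀ z : L → Option Bool, IsMPH z → Erel z y → Erel z (gmap oc x)) := by
  have hF := hx.1.isLatFilter_trueFilter
  obtain ⟨F, I, hFI, hxF, hxI⟩ := exists_isMDFIP_of_subset hF (hoc.isLatIdeal_preimage hF)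
    (hoc.inter_preimage_eq_empty hF hx.1.bot_notMem_trueFilter)
  refine ⟨pairFun F I, hFI.isMPH_pairFun, ?_, ?_⟩
  · rintro z - hyz a ⟨hxa, hza⟩
    exact hyz a ⟨pairFun_eq_some_true_iff.2 (hxF ⟨a, hxa, le_rfl⟩), hza⟩
  · rintro z - hzy a ⟨hza, hxa⟩
    have hoca : oc a ∈ trueFilter x := ⟨oc a, gmap_eq_some_false_iff.1 hxa, le_rfl⟩
    exact hzy a ⟨hza, (pairFun_eq_some_false_iff hFI.2.2.1).2 (hxI hoca)⟩
end

section
/- Let (X, E) be a digraph in which every pair (x,y) ∉ E is separated: there exists a maximal partial E-preserving map φ into ({0,1},≤) with φ(x) = 1 and φ(y) = 0 (the (TED) condition). Then the space is doubly disconnected: (a) if yE ⊄ xE there exists such a φ with φ(x) = 1 and φ(y) ≠ 1; (b) if Ey ⊄ Ex there exists such a φ with φ(x) = 0 and φ(y) ≠ 0. -/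
/-- A partial map `φ : X ⇀ Bool` preserves the digraph relation `E`. -/
def PreservesE {X : Type*} (E : X → X → Prop) (φ : X → Option Bool) : Prop :=
  ∀ x y : X, ∀ a b : Bool, E x y → φ x = some a → φ y = some b → a ≤ b

/-- A maximal partial `E`-preserving map into `({0,1}, ≤)`. -/
def IsMPE {X : Type*} (E : X → X → Prop) (φ : X → Option Bool) : Prop :=
  PreservesE E φ ∧
  ∀ ψ : X → Option Bool, PreservesE E ψ → (∀ x : X, ∀ b : Bool, φ x = some b → ψ x = some b) → ψ = φ

theorem PreservesE.ne_some_false_of_some_true {X : Type*} {E : X → X → Prop}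
    {φ : X → Option Bool} (hφ : PreservesE E φ) {u v : X} (huv : E u v) (hu : φ u = some true) :
    φ v ≠ some false :=
  fun hv => absurd (hφ u v true false huv hu hv) (by decide)

/-- The condition (TED) implies double disconnectedness. -/
theorem ted_implies_doubly_disconnected {X : Type*} (E : X → X → Prop)
    (hTED : ∀ x y : X, ¬ E x y →
      ∃ φ : X → Option Bool, IsMPE E φ ∧ φ x = some true ∧ φ y = some false) :
    (∀ x y : X, ¬ ({z : X | E y z} ⊆ {z : X | E x z}) →
      ∃ φ : X → Option Bool, IsMPE E φ ∧ φ x = some true ∧ φ y ≠ some true) ∧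
    (∀ x y : X, ¬ ({z : X | E z y} ⊆ {z : X | E z x}) →
      ∃ φ : X → Option Bool, IsMPE E φ ∧ φ x = some false ∧ φ y ≠ some false) := by
  constructor
  · intro x y h
    obtain ⟨z, hyz, hxz⟩ := Set.not_subset.mp h
    obtain ⟨φ, hφ, hx, hz⟩ := hTED x z hxz
    exact ⟨φ, hφ, hx, fun hy => hφ.1.ne_some_false_of_some_true hyz hy hz⟩
  · intro x y h
    obtain ⟨z, hzy, hzx⟩ := Set.not_subset.mp h
    obtain ⟨φ, hφ, hz, hx⟩ := hTED z x hzx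
    exact ⟨φ, hφ, hx, hφ.1.ne_some_false_of_some_true hzy hz⟩
end

section
/- Let (X, E, g) be as in an ortho-Plo\u0161\u010dica space (g involutive, satisfying (M2), (M3), (O), with E reflexive and satisfying (Ti)). For maximal partial E-preserving maps φ, ψ into ({0,1},≤) with φ⁻¹(1) ⊆ ψ⁻¹(1), the negation operation ¬ defined by (¬φ)(x) = 1 iff φ(g(x)) = 0 and (¬φ)(x) = 0 iff φ(g(x)) = 1 is order-reversing: (¬ψ)⁻¹(1) ⊆ (¬φ)⁻¹(1). -/
/-- The negation of a maximal partial `E`-preserving map. -/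
def negMap {X : Type*} (g : X → X) (φ : X → Option Bool) : X → Option Bool :=
  fun x => Option.map (fun b => !b) (φ (g x))

theorem PreservesE.update_false {X : Type*} [DecidableEq X] {E : X → X → Prop} {φ : X → Option Bool}
    (hφ : PreservesE E φ) {x : X} (hpred : ∀ y, E y x → φ y ≠ some true) :
    PreservesE E (Function.update φ x (some false)) := by
  intro y z a b hyz hy hz
  by_cases hyx : y = x
  · subst hyx
    rw [Function.update_self, Option.some_inj] at hy
    exact hy ▸ Bool.false_le b
  rw [Function.update_of_ne hyx] at hy
  by_cases hzx : z = x
  · subst hzx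
    rw [Function.update_self, Option.some_inj] at hz
    subst hz
    cases a
    · exact le_rfl
    · exact absurd hy (hpred y hyz)
  · rw [Function.update_of_ne hzx] at hz
    exact hφ y z a b hyz hy hz

theorem IsMPE.eq_some_false {X : Type*} {E : X → X → Prop} {φ : X → Option Bool}
    (hφ : IsMPE E φ) {x : X} (hx : φ x ≠ some true) (hpred : ∀ y, E y x → φ y ≠ some true) :
    φ x = some false := by
  classical
  have hext : ∀ y b, φ y = some b → Function.update φ x (some false) y = some b := by
    intro y b hy
    by_cases hyx : y = x
    · subst hyx
      cases b
      · exact Function.update_self ..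
      · exact absurd hy hx
    · rwa [Function.update_of_ne hyx]
  rw [← hφ.2 _ (hφ.1.update_false hpred) hext, Function.update_self]

theorem IsMPE.preimage_false_subset {X : Type*} {E : X → X → Prop} {φ ψ : X → Option Bool}
    (hφ : IsMPE E φ) (hψ : PreservesE E ψ)
    (hle : {x : X | φ x = some true} ⊆ {x : X | ψ x = some true}) :
    {x : X | ψ x = some false} ⊆ {x : X | φ x = some false} := by
  intro x hx
  refine hφ.eq_some_false (fun hφx => ?_) (fun y hyx hφy => ?_)
  · exact Bool.noConfusion (Option.some_inj.mp ((hle hφx).symm.trans hx))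
  · exact absurd (hψ y x true false hyx (hle hφy) hx) (by decide)

theorem negMap_eq_some_true {X : Type*} (g : X → X) (φ : X → Option Bool) (x : X) :
    negMap g φ x = some true ↔ φ (g x) = some false := by
  simp only [negMap, Option.map_eq_some_iff, Bool.not_eq_true']
  exact ⟨fun ⟨b, hb, hbf⟩ => hbf ▸ hb, fun h => ⟨false, h, rfl⟩⟩

theorem neg_order_reversing_general {X : Type*} (E : X → X → Prop) (g : X → X)
    (φ ψ : X → Option Bool) (hφ : IsMPE E φ) (hψ : IsMPE E ψ)
    (hle : {x : X | φ x = some true} ⊆ {x : X | ψ x = some true}) :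
    {x : X | negMap g ψ x = some true} ⊆ {x : X | negMap g φ x = some true} := by
  intro x hx
  rw [Set.mem_ofPred_eq, negMap_eq_some_true] at hx ⊢
  exact hφ.preimage_false_subset hψ.1 hle hx

/-- In an ortho-Ploščica-type structure, the negation `¬` is order-reversing. -/
theorem neg_order_reversing {X : Type*} (E : X → X → Prop) (g : X → X)
    (hrefl : ∀ x : X, E x x)
    (hg : ∀ x : X, g (g x) = x)
    (hM2 : ∀ x y : X, {z : X | E x z} ⊆ {z : X | E y z} →
      {z : X | E z (g x)} ⊆ {z : X | E z (g y)})
    (hM3 : ∀ x y : X, {z : X | E z x} ⊆ {z : X | E z y} →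
      {z : X | E (g x) z} ⊆ {z : X | E (g y) z})
    (hO : ∀ x : X, ∃ y : X, {z : X | E y z} ⊆ {z : X | E x z} ∧
      {z : X | E z y} ⊆ {z : X | E z (g x)})
    (hTi : ∀ x y : X, E x y →
      ∃ z : X, {w : X | E z w} ⊆ {w : X | E x w} ∧ {w : X | E w z} ⊆ {w : X | E w y})
    (φ ψ : X → Option Bool) (hφ : IsMPE E φ) (hψ : IsMPE E ψ)
    (hle : {x : X | φ x = some true} ⊆ {x : X | ψ x = some true}) :
    {x : X | negMap g ψ x = some true} ⊆ {x : X | negMap g φ x = some true} :=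
  neg_order_reversing_general E g φ ψ hφ hψ hle
end

section
/- Let (X, E, g) satisfy: E reflexive, g : X → X with (O): for every y there exists w with wE ⊆ yE and Ew ⊆ Eg(y). Let φ be a maximal partial E-preserving map into ({0,1},≤). Then there is no y ∈ X with φ(g(y)) = 0 and φ(y) = 1; consequently (¬φ)⁻¹(1) ∩ φ⁻¹(1) = ∅, i.e. ¬φ ∧ φ is the bottom element φ₀ of the lattice of maximal partial E-preserving maps. -/
/-! If `φ y = 1` and `w` is the point given by (O), then `wE ⊆ yE` means no successor of `w`
is `0`, so maximality forces `φ w = 1`; since `w E g(y)`, monotonicity rules out `φ (g y) = 0`. -/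

section

variable {X : Type*} {E : X → X → Prop} {φ : X → Option Bool}

theorem PreservesE.ne_some_false_of_rel (hφ : PreservesE E φ) {x z : X} (hxz : E x z)
    (hx : φ x = some true) : φ z ≠ some false :=
  fun hz => absurd (hφ x z true false hxz hx hz) (by decide)

theorem PreservesE.update_some_true [DecidableEq X] (hφ : PreservesE E φ) {w : X}
    (hw : ∀ z, E w z → φ z ≠ some false) :
    PreservesE E (Function.update φ w (some true)) := by
  intro x z a b hxz hxa hzb
  rcases eq_or_ne z w with rfl | hz
  · simp_all
  rcases eq_or_ne x w with rfl | hx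
  · rw [Function.update_of_ne hz] at hzb
    rw [Function.update_self, Option.some_inj] at hxa
    subst hxa
    cases b
    · exact absurd hzb (hw z hxz)
    · rfl
  · rw [Function.update_of_ne hx] at hxa
    rw [Function.update_of_ne hz] at hzb
    exact hφ x z a b hxz hxa hzb

theorem IsMPE.eq_some_true_of_forall_rel_ne_false (hφ : IsMPE E φ) {w : X} (hww : E w w)
    (hw : ∀ z, E w z → φ z ≠ some false) : φ w = some true := by
  classical
  rcases hcase : φ w with _ | _ | _
  -- an undefined `φ w` could be set to `1`, giving a strictly larger `E`-preserving map
  · have hext : ∀ x b, φ x = some b → Function.update φ w (some true) x = some b :=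
      fun x b hx => by
        rw [Function.update_of_ne (by rintro rfl; simp_all)]
        exact hx
    have := congrFun (hφ.2 _ (hφ.1.update_some_true hw) hext) w
    simp_all
  · exact absurd hcase (hw w hww)
  · rfl

theorem negMap_eq_some_true_iff {g : X → X} {x : X} :
    negMap g φ x = some true ↔ φ (g x) = some false := by
  simp [negMap]

end

/-- Under reflexivity of `E` and condition (O), there is no `y` with `φ(g(y)) = 0`
and `φ(y) = 1`; consequently `(¬φ)⁻¹(1) ∩ φ⁻¹(1) = ∅`, i.e. `¬φ ∧ φ` is the bottom
element of the dual lattice. -/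
theorem neg_meet_bottom {X : Type*} (E : X → X → Prop) (g : X → X)
    (hrefl : ∀ x : X, E x x)
    (hO : ∀ y : X, ∃ w : X, {z : X | E w z} ⊆ {z : X | E y z} ∧
      {z : X | E z w} ⊆ {z : X | E z (g y)})
    (φ : X → Option Bool) (hφ : IsMPE E φ) :
    (¬ ∃ y : X, φ (g y) = some false ∧ φ y = some true) ∧
    {x : X | negMap g φ x = some true} ∩ {x : X | φ x = some true} = ∅ := by
  have key : ¬ ∃ y : X, φ (g y) = some false ∧ φ y = some true := by
    rintro ⟨y, hgy, hy⟩
    obtain ⟨w, hwy, hwgy⟩ := hO y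
    have hw : φ w = some true :=
      hφ.eq_some_true_of_forall_rel_ne_false (hrefl w)
        fun z hwz => hφ.1.ne_some_false_of_rel (hwy hwz) hy
    exact hφ.1.ne_some_false_of_rel (hwgy (hrefl w)) hw hgy
  refine ⟨key, Set.eq_empty_of_forall_notMem fun x ⟨hneg, hx⟩ => key ⟨x, ?_, hx⟩⟩
  exact negMap_eq_some_true_iff.mp hneg
end
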